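/- arXiv:1403.3105 — 7 statements merged into one kernel-verified Lean document; each statement's English description precedes it below -/
import Mathlib

section
/- Let X = C ∪ L ⊆ ℝ², where C = {(x,y) ∈ ℝ² : x ≤ −3|y|} and L = [0,∞) × {0}, equipped with the subspace topology from ℝ². Then X does not topologically split: there is no topological space Z such that X is homeomorphic to the product space ℝ × Z. -/
/- The space `X = C ∪ L ⊆ ℝ²` with the subspace topology does not topologically split:
there is no topological space `Z` with `X ≃ₜ ℝ × Z`. -/

open Set Topology

noncomputable section

/-- The cone `C = {(x,y) : x ≤ -3|y|}`. -/
def coneC : Set (ℝ × ℝ) := {p | p.1 ≤ -3 * |p.2|}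

/-- The half-line `L = [0,∞) × {0}`. -/
def lineL : Set (ℝ × ℝ) := Set.Ici (0 : ℝ) ×ˢ ({0} : Set ℝ)

/-- The space `X = C ∪ L`. -/
def spaceX : Set (ℝ × ℝ) := coneC ∪ lineL

lemma convex_coneC : Convex ℝ coneC := by
  intro p hp q hq a b ha hb hab
  simp only [coneC, mem_setOf_eq] at hp hq ⊢
  have h1 : |a * p.2 + b * q.2| ≤ a * |p.2| + b * |q.2| := by
    calc |a * p.2 + b * q.2| ≤ |a * p.2| + |b * q.2| := abs_add_le _ _
      _ = a * |p.2| + b * |q.2| := by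
          rw [abs_mul, abs_mul, abs_of_nonneg ha, abs_of_nonneg hb]
  have h2 : a * p.1 ≤ a * (-3 * |p.2|) := mul_le_mul_of_nonneg_left hp ha
  have h3 : b * q.1 ≤ b * (-3 * |q.2|) := mul_le_mul_of_nonneg_left hq hb
  have : (a • p + b • q).1 = a * p.1 + b * q.1 := rfl
  have h5 : (a • p + b • q).2 = a * p.2 + b * q.2 := rfl
  rw [this, h5]
  nlinarith [h1, h2, h3]

lemma convex_lineL : Convex ℝ lineL := (convex_Ici 0).prod (convex_singleton 0)

lemma origin_mem_coneC : ((0 : ℝ), (0 : ℝ)) ∈ coneC := by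
  simp [coneC]

lemma origin_mem_spaceX : ((0 : ℝ), (0 : ℝ)) ∈ spaceX := Or.inl origin_mem_coneC

lemma pathConnected_spaceX : IsPathConnected spaceX := by
  have hC : IsPathConnected coneC := convex_coneC.isPathConnected ⟨_, origin_mem_coneC⟩
  have hL : IsPathConnected lineL := convex_lineL.isPathConnected ⟨((0:ℝ),(0:ℝ)), by simp [lineL]⟩
  exact hC.union hL ⟨((0:ℝ),(0:ℝ)), origin_mem_coneC, by simp [lineL]⟩

/-- `X` minus the interior cone point `(-10,0)` is still connected. -/
lemma isConnected_spaceX_diff :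
    IsConnected (spaceX \ {(((-10 : ℝ)), (0 : ℝ))}) := by
  have hs : Convex ℝ {p : ℝ × ℝ | 0 < p.2} :=
    convex_halfSpace_gt (LinearMap.snd ℝ ℝ ℝ).isLinear 0
  have hs' : Convex ℝ {p : ℝ × ℝ | p.2 < 0} :=
    convex_halfSpace_lt (LinearMap.snd ℝ ℝ ℝ).isLinear 0
  have hf : Convex ℝ {p : ℝ × ℝ | (-10 : ℝ) < p.1} :=
    convex_halfSpace_gt (LinearMap.fst ℝ ℝ ℝ).isLinear (-10)
  have hf' : Convex ℝ {p : ℝ × ℝ | p.1 < (-10 : ℝ)} :=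
    convex_halfSpace_lt (LinearMap.fst ℝ ℝ ℝ).isLinear (-10)
  set A1 : Set (ℝ × ℝ) := coneC ∩ {p | 0 < p.2} with hA1
  set A2 : Set (ℝ × ℝ) := coneC ∩ {p | p.2 < 0} with hA2
  set A3 : Set (ℝ × ℝ) := coneC ∩ {p | (-10 : ℝ) < p.1} with hA3
  set A5 : Set (ℝ × ℝ) := coneC ∩ {p | p.1 < (-10 : ℝ)} with hA5
  have h1 : IsPathConnected A1 :=
    (convex_coneC.inter hs).isPathConnected ⟨((-3:ℝ),(1:ℝ)), by norm_num [coneC, hA1, abs_one]⟩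
  have h2 : IsPathConnected A2 :=
    (convex_coneC.inter hs').isPathConnected ⟨((-3:ℝ),(-1:ℝ)), by norm_num [coneC, hA2, abs_one]⟩
  have h3 : IsPathConnected A3 :=
    (convex_coneC.inter hf).isPathConnected ⟨((0:ℝ),(0:ℝ)), by norm_num [coneC, hA3]⟩
  have h5 : IsPathConnected A5 :=
    (convex_coneC.inter hf').isPathConnected ⟨((-11:ℝ),(0:ℝ)), by norm_num [coneC, hA5]⟩
  have hL : IsPathConnected lineL :=
    convex_lineL.isPathConnected ⟨((0:ℝ),(0:ℝ)), by simp [lineL]⟩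
  have u1 : IsPathConnected (A3 ∪ A1) :=
    h3.union h1 ⟨((-5:ℝ),(1:ℝ)), by constructor <;> norm_num [coneC, hA1, hA3, abs_one]⟩
  have u2 : IsPathConnected ((A3 ∪ A1) ∪ A2) :=
    u1.union h2 ⟨((-5:ℝ),(-1:ℝ)), Or.inl (by norm_num [coneC, hA3, abs_one]),
      by norm_num [coneC, hA2, abs_one]⟩
  have u3 : IsPathConnected (((A3 ∪ A1) ∪ A2) ∪ A5) :=
    u2.union h5 ⟨((-20:ℝ),(1:ℝ)), Or.inl (Or.inr (by norm_num [coneC, hA1])),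
      by norm_num [coneC, hA5]⟩
  have u4 : IsPathConnected ((((A3 ∪ A1) ∪ A2) ∪ A5) ∪ lineL) :=
    u3.union hL ⟨((0:ℝ),(0:ℝ)), Or.inl (Or.inl (Or.inl (by norm_num [coneC, hA3]))),
      by simp [lineL]⟩
  have heq : (((A3 ∪ A1) ∪ A2) ∪ A5) ∪ lineL = spaceX \ {(((-10 : ℝ)), (0 : ℝ))} := by
    ext ⟨x, y⟩
    constructor
    · rintro ((((⟨hc, hx⟩ | ⟨hc, hy⟩) | ⟨hc, hy⟩) | ⟨hc, hx⟩) | hl)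
      · exact ⟨Or.inl hc, by simp only [mem_singleton_iff, Prod.mk.injEq]; rintro ⟨rfl, rfl⟩; exact absurd hx (by norm_num)⟩
      · exact ⟨Or.inl hc, by simp only [mem_singleton_iff, Prod.mk.injEq]; rintro ⟨rfl, rfl⟩; exact absurd hy (by norm_num)⟩
      · exact ⟨Or.inl hc, by simp only [mem_singleton_iff, Prod.mk.injEq]; rintro ⟨rfl, rfl⟩; exact absurd hy (by norm_num)⟩
      · exact ⟨Or.inl hc, by simp only [mem_singleton_iff, Prod.mk.injEq]; rintro ⟨rfl, rfl⟩; exact absurd hx (by norm_num)⟩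
      · refine ⟨Or.inr hl, ?_⟩
        obtain ⟨hx, hy⟩ := hl
        simp only [mem_Ici] at hx
        simp only [mem_singleton_iff, Prod.mk.injEq]
        rintro ⟨rfl, rfl⟩
        norm_num at hx
    · rintro ⟨hc | hl, hne⟩
      · simp only [mem_singleton_iff, Prod.mk.injEq, not_and] at hne
        rcases lt_trichotomy y 0 with hy | hy | hy
        · exact Or.inl (Or.inl (Or.inr ⟨hc, hy⟩))
        · subst hy
          have hx0 : x ≤ 0 := by
            have := hc; simp only [coneC, mem_setOf_eq, abs_zero] at this; linarith
          rcases lt_trichotomy x (-10 : ℝ) with hx | hx | hx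
          · exact Or.inl (Or.inr ⟨hc, hx⟩)
          · exact absurd rfl (hne hx)
          · exact Or.inl (Or.inl (Or.inl (Or.inl ⟨hc, hx⟩)))
        · exact Or.inl (Or.inl (Or.inl (Or.inr ⟨hc, hy⟩)))
      · exact Or.inr hl
  rw [heq] at u4
  exact u4.isConnected

/-- `X` minus the origin is disconnected. -/
lemma not_preconnected_spaceX_diff_origin :
    ¬ IsPreconnected (spaceX \ {((0 : ℝ), (0 : ℝ))}) := by
  intro h
  have hU : IsOpen {p : ℝ × ℝ | p.1 < 0} := isOpen_Iio.preimage continuous_fst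
  have hV : IsOpen {p : ℝ × ℝ | 0 < p.1} := isOpen_Ioi.preimage continuous_fst
  have hcov : spaceX \ {((0 : ℝ), (0 : ℝ))} ⊆ {p : ℝ × ℝ | p.1 < 0} ∪ {p | 0 < p.1} := by
    rintro ⟨x, y⟩ ⟨hc | hl, hne⟩
    · simp only [mem_singleton_iff, Prod.mk.injEq, not_and] at hne
      simp only [coneC, mem_setOf_eq] at hc
      have hx0 : x ≤ 0 := by nlinarith [abs_nonneg y]
      rcases lt_or_eq_of_le hx0 with hx | hx
      · exact Or.inl hx
      · exfalso
        rw [hx] at hc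
        have h0 : |y| ≤ 0 := by linarith
        have hy : y = 0 := abs_eq_zero.mp (le_antisymm h0 (abs_nonneg y))
        exact hne hx hy
    · obtain ⟨hx, hy⟩ := hl
      simp only [mem_Ici] at hx
      simp only [mem_singleton_iff] at hy
      subst hy
      rcases lt_or_eq_of_le hx with hx | hx
      · exact Or.inr hx
      · exact absurd (show ((x, (0:ℝ)) = ((0:ℝ),(0:ℝ))) by rw [← hx]) hne
  have hne1 : ((spaceX \ {((0:ℝ),(0:ℝ))}) ∩ {p : ℝ × ℝ | p.1 < 0}).Nonempty := by
    refine ⟨((-1 : ℝ), (0 : ℝ)), ⟨Or.inl (by norm_num [coneC]), ?_⟩, by norm_num⟩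
    simp only [mem_singleton_iff, Prod.mk.injEq]
    norm_num
  have hne2 : ((spaceX \ {((0:ℝ),(0:ℝ))}) ∩ {p : ℝ × ℝ | 0 < p.1}).Nonempty := by
    refine ⟨((1 : ℝ), (0 : ℝ)), ⟨Or.inr (by norm_num [lineL]), ?_⟩, by norm_num⟩
    simp only [mem_singleton_iff, Prod.mk.injEq]
    norm_num
  obtain ⟨p, _, hp1, hp2⟩ := h _ _ hU hV hcov hne1 hne2
  simp only [mem_setOf_eq] at hp1 hp2
  linarith

/-- If `Z` is connected with at least two points, the complement of any point of `ℝ × Z`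
is connected. -/
lemma prod_compl_connected {Z : Type} [TopologicalSpace Z] [ConnectedSpace Z]
    [Nontrivial Z] (p : ℝ × Z) : IsConnected ({p}ᶜ : Set (ℝ × Z)) := by
  obtain ⟨t, z⟩ := p
  obtain ⟨w, hw⟩ := exists_ne z
  set S : Z → Set (ℝ × Z) := fun w' =>
    ((Ioi t ×ˢ (univ : Set Z)) ∪ ((univ : Set ℝ) ×ˢ ({w'} : Set Z))) ∪
      (Iio t ×ˢ (univ : Set Z)) with hS
  have hSconn : ∀ w', IsConnected (S w') := by
    intro w'
    have c1 : IsConnected (Ioi t ×ˢ (univ : Set Z)) := isConnected_Ioi.prod isConnected_univ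
    have c2 : IsConnected ((univ : Set ℝ) ×ˢ ({w'} : Set Z)) :=
      isConnected_univ.prod isConnected_singleton
    have c3 : IsConnected (Iio t ×ˢ (univ : Set Z)) := isConnected_Iio.prod isConnected_univ
    have u1 : IsConnected ((Ioi t ×ˢ (univ : Set Z)) ∪ ((univ : Set ℝ) ×ˢ ({w'} : Set Z))) :=
      IsConnected.union ⟨(t + 1, w'), by simp, by simp⟩ c1 c2
    exact IsConnected.union ⟨(t - 1, w'), Or.inr (by simp), by simp⟩ u1 c3
  have hcov : ({((t, z) : ℝ × Z)}ᶜ : Set (ℝ × Z)) = ⋃₀ (S '' ({z}ᶜ : Set Z)) := by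
    ext ⟨s, y⟩
    simp only [mem_compl_iff, mem_singleton_iff, mem_sUnion, mem_image, Prod.mk.injEq, not_and]
    constructor
    · intro hq
      by_cases h2 : y = z
      · have h1 : s ≠ t := by
          intro h1; exact hq h1 h2
        refine ⟨S w, ⟨w, hw, rfl⟩, ?_⟩
        rcases lt_or_gt_of_ne h1 with h | h
        · exact Or.inr (by simp [hS, h])
        · exact Or.inl (Or.inl (by simp [hS, h]))
      · exact ⟨S y, ⟨y, h2, rfl⟩, Or.inl (Or.inr (by simp [hS]))⟩
    · rintro ⟨u, ⟨w', hw', rfl⟩, hq⟩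
      rcases hq with (h | h) | h
      · intro hst
        have ht : t < s := by simpa [hS] using h.1
        exact absurd hst (ne_of_gt ht)
      · intro _ hyz
        have hy : y = w' := by simpa [hS] using h.2
        exact hw' (by rw [← hy]; exact hyz)
      · intro hst
        have ht : s < t := by simpa [hS] using h.1
        exact absurd hst (ne_of_lt ht)
  constructor
  · refine ⟨(t + 1, z), ?_⟩
    simp only [mem_compl_iff, mem_singleton_iff, Prod.mk.injEq, not_and]
    intro h; linarith
  · rw [hcov]
    refine isPreconnected_sUnion (t + 1, w) _ ?_ ?_
    · rintro u ⟨w', _, rfl⟩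
      exact Or.inl (Or.inl (by simp [hS]))
    · rintro u ⟨w', _, rfl⟩
      exact (hSconn w').isPreconnected

/-- If `Z` is a (nonempty) subsingleton, the complement of any point of `ℝ × Z` is
disconnected. -/
lemma prod_compl_not_preconnected {Z : Type} [TopologicalSpace Z] [Subsingleton Z]
    (p : ℝ × Z) : ¬ IsPreconnected ({p}ᶜ : Set (ℝ × Z)) := by
  intro h
  have hU : IsOpen {q : ℝ × Z | q.1 < p.1} := isOpen_Iio.preimage continuous_fst
  have hV : IsOpen {q : ℝ × Z | p.1 < q.1} := isOpen_Ioi.preimage continuous_fst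
  have hcov : ({p}ᶜ : Set (ℝ × Z)) ⊆ {q : ℝ × Z | q.1 < p.1} ∪ {q | p.1 < q.1} := by
    intro q hq
    rcases lt_trichotomy q.1 p.1 with h1 | h1 | h1
    · exact Or.inl h1
    · exact absurd (Prod.ext h1 (Subsingleton.elim _ _)) hq
    · exact Or.inr h1
  have hne1 : (({p}ᶜ : Set (ℝ × Z)) ∩ {q : ℝ × Z | q.1 < p.1}).Nonempty := by
    refine ⟨(p.1 - 1, p.2), ?_, by simp⟩
    simp only [mem_compl_iff, mem_singleton_iff]
    intro he
    have := congrArg Prod.fst he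
    simp only at this
    linarith
  have hne2 : (({p}ᶜ : Set (ℝ × Z)) ∩ {q : ℝ × Z | p.1 < q.1}).Nonempty := by
    refine ⟨(p.1 + 1, p.2), ?_, by simp⟩
    simp only [mem_compl_iff, mem_singleton_iff]
    intro he
    have := congrArg Prod.fst he
    simp only at this
    linarith
  obtain ⟨q, _, h1, h2⟩ := h _ _ hU hV hcov hne1 hne2
  simp only [mem_setOf_eq] at h1 h2
  linarith

lemma val_image_compl_singleton {α : Type*} {s : Set α} (a : ↥s) :
    Subtype.val '' ({a}ᶜ : Set ↥s) = s \ {(a : α)} := by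
  ext x
  constructor
  · rintro ⟨⟨y, hy⟩, hne, rfl⟩
    refine ⟨hy, ?_⟩
    simp only [mem_singleton_iff]
    intro h
    exact hne (by simp only [mem_singleton_iff]; exact Subtype.ext h)
  · rintro ⟨hx, hne⟩
    refine ⟨⟨x, hx⟩, ?_, rfl⟩
    simp only [mem_compl_iff, mem_singleton_iff]
    intro h
    exact hne (by simpa using congrArg Subtype.val h)

/-- `X` (with the subspace topology from `ℝ²`) is not homeomorphic to any product `ℝ × Z`. -/
theorem spaceX_does_not_split :
    ¬ ∃ (Z : Type) (_ : TopologicalSpace Z), Nonempty (↥spaceX ≃ₜ ℝ × Z) := by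
  rintro ⟨Z, _, ⟨e⟩⟩
  have hXpc : IsConnected spaceX := pathConnected_spaceX.isConnected
  have : ConnectedSpace ↥spaceX := Subtype.connectedSpace hXpc
  have hRZ : ConnectedSpace (ℝ × Z) := by
    rw [connectedSpace_iff_univ]
    have h1 : IsConnected (range e) := isConnected_range e.continuous
    rwa [e.range_coe] at h1
  have hZ : ConnectedSpace Z := by
    rw [connectedSpace_iff_univ]
    have h1 : IsConnected (Prod.snd '' (univ : Set (ℝ × Z))) :=
      isConnected_univ.image _ continuous_snd.continuousOn
    rwa [image_univ, Prod.range_snd] at h1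
  rcases subsingleton_or_nontrivial Z with hs | hn
  · -- Z is a point: `ℝ × Z` minus any point is disconnected, but `X` minus `(-10,0)` isn't.
    have hq : (((-10 : ℝ)), (0 : ℝ)) ∈ spaceX := Or.inl (by norm_num [coneC])
    set q : ↥spaceX := ⟨(((-10 : ℝ)), (0 : ℝ)), hq⟩ with hqdef
    have h2 : IsPreconnected ({q}ᶜ : Set ↥spaceX) := by
      rw [← IsInducing.subtypeVal.isPreconnected_image]
      rw [val_image_compl_singleton]
      exact isConnected_spaceX_diff.isPreconnected
    have h3 : IsConnected ({q}ᶜ : Set ↥spaceX) := by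
      refine ⟨⟨⟨((0:ℝ),(0:ℝ)), origin_mem_spaceX⟩, ?_⟩, h2⟩
      simp only [mem_compl_iff, mem_singleton_iff, hqdef]
      intro h
      have := congrArg (fun x => (Subtype.val x).1) h
      simp only at this
      linarith
    have h4 : IsConnected (e '' ({q}ᶜ : Set ↥spaceX)) :=
      h3.image e e.continuous.continuousOn
    rw [image_compl_eq e.bijective, image_singleton] at h4
    exact prod_compl_not_preconnected (e q) h4.isPreconnected
  · -- Z has two points: `ℝ × Z` minus any point is connected, but `X` minus the origin isn't.
    set o : ↥spaceX := ⟨((0 : ℝ), (0 : ℝ)), origin_mem_spaceX⟩ with hodef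
    have h1 : IsConnected ({e o}ᶜ : Set (ℝ × Z)) := prod_compl_connected (e o)
    have h2 : IsConnected (e.symm '' ({e o}ᶜ : Set (ℝ × Z))) :=
      h1.image e.symm e.symm.continuous.continuousOn
    rw [image_compl_eq e.symm.bijective, image_singleton, e.symm_apply_apply] at h2
    have h3 : IsConnected (Subtype.val '' ({o}ᶜ : Set ↥spaceX)) :=
      h2.image Subtype.val continuous_subtype_val.continuousOn
    rw [val_image_compl_singleton] at h3
    exact not_preconnected_spaceX_diff_origin h3.isPreconnected

end
end

section
/- Let X = C ∪ L ⊆ ℝ², where C = {(x,y) ∈ ℝ² : x ≤ −3|y|} and L = [0,∞) × {0}. Let 𝔪 be the measure on ℝ² that equals the one-dimensional Hausdorff measure restricted to L plus the measure with density (x,y) ↦ 3/(−2x) with respect to two-dimensional Lebesgue measure restricted to C. Then the pushforward of 𝔪 under the first-coordinate projection (x,y) ↦ x is the one-dimensional Lebesgue measure on ℝ. -/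
/- The pushforward of the measure `𝔪` (1d Hausdorff measure on `L = [0,∞) × {0}` plus the
measure with density `3/(-2x)` w.r.t. 2d Lebesgue measure on the cone `C`) under the
first-coordinate projection is the one-dimensional Lebesgue measure on `ℝ`. -/

open MeasureTheory Set

noncomputable section

/-- The reference measure `𝔪`. -/
def measM : Measure (ℝ × ℝ) :=
  (μH[1]).restrict lineL +
    ((volume : Measure (ℝ × ℝ)).restrict coneC).withDensity
      (fun p => ENNReal.ofReal (3 / (-2 * p.1)))

lemma coneC_meas : MeasurableSet coneC :=
  (isClosed_le continuous_fst
    (continuous_const.mul (continuous_abs.comp continuous_snd))).measurableSet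

lemma slice_eq (x : ℝ) : {y : ℝ | (x, y) ∈ coneC} = Icc (x / 3) (-(x / 3)) := by
  ext y
  simp only [coneC, mem_setOf_eq, mem_Icc]
  constructor
  · intro h
    have h1 : |y| ≤ -(x / 3) := by linarith [abs_nonneg y]
    obtain ⟨ha, hb⟩ := abs_le.mp h1
    exact ⟨by linarith, hb⟩
  · intro ⟨h1, h2⟩
    have : |y| ≤ -(x / 3) := abs_le.mpr ⟨by linarith, h2⟩
    linarith

theorem measM_proj_eq_lebesgue :
    Measure.map Prod.fst measM = (volume : Measure ℝ) := by
  have hf : Measurable (fun p : ℝ × ℝ => ENNReal.ofReal (3 / (-2 * p.1))) := by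
    apply Measurable.ennreal_ofReal
    exact measurable_const.div (measurable_const.mul measurable_fst)
  ext s hs
  rw [Measure.map_apply measurable_fst hs]
  show ((μH[1]).restrict lineL +
      ((volume : Measure (ℝ × ℝ)).restrict coneC).withDensity
        (fun p => ENNReal.ofReal (3 / (-2 * p.1)))) (Prod.fst ⁻¹' s) = volume s
  rw [Measure.add_apply]
  have h1 : (μH[1]).restrict lineL (Prod.fst ⁻¹' s) = volume (s ∩ Ici 0) := by
    rw [Measure.restrict_apply (measurable_fst hs)]
    have hiso : Isometry (fun x : ℝ => (x, (0:ℝ))) := by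
      intro a b
      simp [Prod.edist_eq]
    have himg : Prod.fst ⁻¹' s ∩ lineL = (fun x : ℝ => (x, (0:ℝ))) '' (s ∩ Ici 0) := by
      ext ⟨x, y⟩
      simp only [lineL, mem_inter_iff, mem_preimage, mem_prod, mem_Ici, mem_singleton_iff,
        mem_image, mem_inter_iff]
      constructor
      · rintro ⟨hx, hx0, hy⟩
        exact ⟨x, ⟨hx, hx0⟩, by simp [hy]⟩
      · rintro ⟨a, ⟨ha, ha0⟩, h⟩
        obtain ⟨rfl, rfl⟩ := Prod.mk.injEq .. ▸ h
        exact ⟨ha, ha0, rfl⟩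
    rw [himg, hiso.hausdorffMeasure_image (Or.inl one_pos.le),
      MeasureTheory.hausdorffMeasure_real]
  have h2 : (((volume : Measure (ℝ × ℝ)).restrict coneC).withDensity
      (fun p => ENNReal.ofReal (3 / (-2 * p.1)))) (Prod.fst ⁻¹' s)
      = volume (s ∩ Iio 0) := by
    rw [withDensity_apply _ (measurable_fst hs),
      Measure.restrict_restrict (measurable_fst hs),
      ← lintegral_indicator ((measurable_fst hs).inter coneC_meas) _,
      Measure.volume_eq_prod, lintegral_prod _
        ((hf.indicator ((measurable_fst hs).inter coneC_meas)).aemeasurable)]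
    have key : ∀ x : ℝ, (∫⁻ y, ((Prod.fst ⁻¹' s ∩ coneC).indicator
        (fun p => ENNReal.ofReal (3 / (-2 * p.1)))) (x, y) ∂volume)
        = (s ∩ Iio 0).indicator 1 x := by
      intro x
      by_cases hxs : x ∈ s
      · have : ∀ y : ℝ, ((Prod.fst ⁻¹' s ∩ coneC).indicator
            (fun p => ENNReal.ofReal (3 / (-2 * p.1)))) (x, y)
            = (Icc (x / 3) (-(x / 3))).indicator
              (fun _ => ENNReal.ofReal (3 / (-2 * x))) y := by
          intro y
          by_cases hy : (x, y) ∈ coneC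
          · rw [indicator_of_mem (mem_inter (show (x, y) ∈ Prod.fst ⁻¹' s from hxs) hy) _, indicator_of_mem]
            rw [← slice_eq x]; exact hy
          · rw [indicator_of_notMem (fun h => hy h.2), indicator_of_notMem]
            rw [← slice_eq x]; exact hy
        simp only [this]
        rw [lintegral_indicator measurableSet_Icc]
        simp only [lintegral_const, Measure.restrict_apply MeasurableSet.univ,
          univ_inter, Real.volume_Icc]
        by_cases hx0 : x < 0
        · rw [indicator_of_mem (mem_inter hxs (show x ∈ Iio 0 from hx0)) _]
          have hx : x ≠ 0 := ne_of_lt hx0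
          rw [← ENNReal.ofReal_mul (le_of_lt (div_pos (by norm_num) (by linarith)))]
          rw [show (3 / (-2 * x)) * (-(x / 3) - x / 3) = 1 by
            field_simp; ring]
          simp
        · rw [indicator_of_notMem (fun h => hx0 h.2)]
          rw [show ENNReal.ofReal (-(x / 3) - x / 3) = 0 from
            ENNReal.ofReal_of_nonpos (by push_neg at hx0; linarith)]
          simp
      · have : ∀ y : ℝ, ((Prod.fst ⁻¹' s ∩ coneC).indicator
            (fun p => ENNReal.ofReal (3 / (-2 * p.1)))) (x, y) = 0 := by
          intro y
          exact indicator_of_notMem (fun h => hxs h.1) _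
        simp only [this, lintegral_zero]
        rw [indicator_of_notMem (fun h => hxs h.1)]
    simp only [key]
    rw [lintegral_indicator (hs.inter measurableSet_Iio)]
    simp
  rw [h1, h2]
  have : s ∩ Iio 0 = s \ Ici 0 := by
    ext x; simp [not_le]
  rw [this]
  exact measure_inter_add_diff s measurableSet_Ici

end
end

section
/- For all t ∈ [0,1] and all l ∈ (0, 1/2], the inequality (5/4 − t/4)·sin²(t·l) ≤ t·sin²(l) holds. -/
set_option maxHeartbeats 800000

open Real

/- For all `t ∈ [0,1]` and `l ∈ (0,1/2]`: `(5/4 - t/4) sin²(tl) ≤ t sin²(l)`. -/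

theorem key_trig_inequality_small_l :
    ∀ t ∈ Set.Icc (0 : ℝ) 1, ∀ l ∈ Set.Ioc (0 : ℝ) (1 / 2),
      (5 / 4 - t / 4) * Real.sin (t * l) ^ 2 ≤ t * Real.sin l ^ 2 := by
  rintro t ⟨ht0, ht1⟩ l ⟨hl0, hl2⟩
  have hpi : (3 : ℝ) < π := by linarith [pi_gt_three]
  have hlpi : l < π := by linarith
  -- basic positivity
  have ha : 0 < Real.sin l := Real.sin_pos_of_pos_of_lt_pi hl0 hlpi
  have hc7 : (7 : ℝ) / 8 ≤ Real.cos l := by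
    have := Real.one_sub_sq_div_two_le_cos (x := l)
    nlinarith
  have hc1 : Real.cos l ≤ 1 := Real.cos_le_one l
  -- sin(t*l) bounds
  have hb0 : 0 ≤ Real.sin (t * l) := by
    apply Real.sin_nonneg_of_nonneg_of_le_pi (by positivity)
    nlinarith
  have hble : Real.sin (t * l) ≤ t * l := Real.sin_le (by positivity)
  -- l * cos l ≤ sin l  (via l < tan l)
  have hcpos : 0 < Real.cos l := by linarith
  have hlt : l < Real.tan l := Real.lt_tan hl0 (by linarith)
  have hlc : l * Real.cos l ≤ Real.sin l := by
    rw [Real.tan_eq_sin_div_cos] at hlt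
    calc l * Real.cos l ≤ (Real.sin l / Real.cos l) * Real.cos l := by
            exact mul_le_mul_of_nonneg_right hlt.le hcpos.le
      _ = Real.sin l := by field_simp
  -- F4 : sin(t*l)^2 * cos l ^2 ≤ t^2 * sin l ^2
  have hF4 : Real.sin (t * l) ^ 2 * Real.cos l ^ 2 ≤ t ^ 2 * Real.sin l ^ 2 := by
    have h1 : Real.sin (t * l) * Real.cos l ≤ t * Real.sin l := by
      calc Real.sin (t * l) * Real.cos l ≤ (t * l) * Real.cos l :=
            mul_le_mul_of_nonneg_right hble hcpos.le
        _ = t * (l * Real.cos l) := by ring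
        _ ≤ t * Real.sin l := by nlinarith
    nlinarith [mul_nonneg hb0 hcpos.le]
  -- concavity of sin
  have hconc := strictConcaveOn_sin_Icc.concaveOn
  -- F2 : sin((1-t)*l) ≥ (1-t) * sin l
  have hF2 : (1 - t) * Real.sin l ≤ Real.sin ((1 - t) * l) := by
    have := hconc.2 ⟨le_rfl, Real.pi_pos.le⟩
      ⟨hl0.le, hlpi.le⟩ ht0 (by linarith : (0:ℝ) ≤ 1 - t) (by ring)
    have e : t • (0:ℝ) + (1 - t) • l = (1 - t) * l := by simp [smul_eq_mul]
    rw [e] at this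
    simpa [smul_eq_mul] using this
  -- F3 : sin((1+t)*l) ≥ (1-t) * sin l + t * sin (2*l)
  have hF3 : (1 - t) * Real.sin l + t * Real.sin (2 * l) ≤ Real.sin ((1 + t) * l) := by
    have h2l : 2 * l ∈ Set.Icc (0 : ℝ) π := ⟨by linarith, by linarith⟩
    have := hconc.2 ⟨hl0.le, hlpi.le⟩ h2l
      (by linarith : (0:ℝ) ≤ 1 - t) ht0 (by ring)
    have heq : (1 - t) • l + t • (2 * l) = (1 + t) * l := by simp [smul_eq_mul]; ring
    rw [heq] at this
    simpa [smul_eq_mul] using this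
  rw [Real.sin_two_mul] at hF3
  -- product formula: sin((1+t)l) * sin((1-t)l) = sin l ^2 - sin(t l)^2
  have hprod : Real.sin ((1 + t) * l) * Real.sin ((1 - t) * l)
      = Real.sin l ^ 2 - Real.sin (t * l) ^ 2 := by
    have e1 : (1 + t) * l = l + t * l := by ring
    have e2 : (1 - t) * l = l - t * l := by ring
    rw [e1, e2, Real.sin_add, Real.sin_sub]
    have := Real.sin_sq_add_cos_sq l
    have := Real.sin_sq_add_cos_sq (t * l)
    nlinarith
  -- lower bound for the product
  have h1t : 0 ≤ (1 - t) * Real.sin l := mul_nonneg (by linarith) ha.le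
  have hQ0 : 0 ≤ Real.sin ((1 - t) * l) := le_trans h1t hF2
  have hP0 : (0:ℝ) ≤ (1 - t) * Real.sin l + t * (2 * Real.sin l * Real.cos l) := by
    have : 0 ≤ t * (2 * Real.sin l * Real.cos l) :=
      mul_nonneg ht0 (by positivity)
    linarith
  have hPQ : ((1 - t) * Real.sin l + t * (2 * Real.sin l * Real.cos l)) * ((1 - t) * Real.sin l)
      ≤ Real.sin l ^ 2 - Real.sin (t * l) ^ 2 := by
    rw [← hprod]
    exact mul_le_mul hF3 hF2 h1t (le_trans hP0 hF3)
  -- finish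
  have hb49 : 49 * Real.sin (t * l) ^ 2 ≤ 64 * (t ^ 2 * Real.sin l ^ 2) := by
    have h1 : 0 ≤ Real.sin (t * l) ^ 2 * ((Real.cos l - 7/8) * (Real.cos l + 7/8)) :=
      mul_nonneg (sq_nonneg _) (mul_nonneg (by linarith) (by linarith))
    nlinarith [hF4]
  have hs : (0:ℝ) ≤ 1 - t := by linarith
  have hsb : 0 ≤ (1 - t) * (64 * (t ^ 2 * Real.sin l ^ 2) - 49 * Real.sin (t * l) ^ 2) :=
    mul_nonneg hs (by linarith)
  have hx : (0:ℝ) ≤ 2 * Real.cos l - 1 - (16 / 49) * t := by linarith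
  have hH : 0 ≤ ((1 - t) * t * Real.sin l ^ 2) * (2 * Real.cos l - 1 - (16 / 49) * t) :=
    mul_nonneg (mul_nonneg (mul_nonneg hs ht0) (sq_nonneg _)) hx
  nlinarith [hPQ, hsb, hH]
end

section
/- For all t ∈ [0,1] and all l ∈ (0, 1/2], the inequality (l/2)·sin(2·t·l) ≤ (5 − t)·(l²/2)·cos(2·t·l) holds; equivalently, the second derivative in t of f_l(t) := (5/4 − t/4)·sin²(t·l) − t·sin²(l), which equals −(l/2)·sin(2tl) + (5 − t)·(l²/2)·cos(2tl), is nonnegative for all t ∈ [0,1] and l ∈ (0, 1/2]. -/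
/- For all `t ∈ [0,1]` and `l ∈ (0,1/2]`:
`(l/2) sin(2tl) ≤ (5 - t)(l²/2) cos(2tl)`, i.e. the second derivative in `t` of
`f_l(t) = (5/4 - t/4) sin²(tl) - t sin²(l)` is nonnegative. -/

theorem second_derivative_nonneg :
    ∀ t ∈ Set.Icc (0 : ℝ) 1, ∀ l ∈ Set.Ioc (0 : ℝ) (1 / 2),
      l / 2 * Real.sin (2 * t * l) ≤ (5 - t) * (l ^ 2 / 2) * Real.cos (2 * t * l) := by
  intro t ht l hl
  obtain ⟨ht0, ht1⟩ := ht
  obtain ⟨hl0, hl1⟩ := hl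
  set x := 2 * t * l with hx
  have hx0 : 0 ≤ x := by positivity
  have hx1 : x ≤ 1 := by nlinarith
  have hsin : Real.sin x ≤ x := Real.sin_le hx0
  have hcos : 1 - x ^ 2 / 2 ≤ Real.cos x := by
    nlinarith [Real.one_sub_sq_div_two_le_cos (x := x)]
  have h1 : l / 2 * Real.sin x ≤ t * l ^ 2 := by nlinarith
  have h2 : 1 - x ^ 2 / 2 ≥ 1 / 2 := by nlinarith
  have h3 : (5 - t) * (l ^ 2 / 2) * Real.cos x ≥ (5 - t) * (l ^ 2 / 2) * (1 / 2) := by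
    have : (0:ℝ) ≤ (5 - t) * (l ^ 2 / 2) := by nlinarith
    nlinarith
  nlinarith
end

section
/- Let D = {(x,y) ∈ ℝ² : 9|y| ≤ 1/4 − |x|} and let d∞ be the ℓ∞-distance on ℝ². Fix (x̃, ỹ) ∈ D with |x̃| ≤ 1/4, and set x' = (1/4 + 4x̃)/5. Then every point p = (x', y) ∈ D satisfies d∞((x̃, ỹ), p) = (1/4 − x̃)/5. In particular, all points of D on the vertical line {x'}×ℝ are at the same ℓ∞-distance (1/4 − x̃)/5 from (x̃, ỹ). -/
open Set

noncomputable section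

/-- The set `D = {(x,y) : 9|y| ≤ 1/4 - |x|}`. -/
def setD : Set (ℝ × ℝ) := {p | 9 * |p.2| ≤ 1 / 4 - |p.1|}

theorem dist_to_slice_const_in_D (x' y' : ℝ) (hmem : (x', y') ∈ setD) (hx : |x'| ≤ 1 / 4)
    (y : ℝ) (hy : ((1 / 4 + 4 * x') / 5, y) ∈ setD) :
    dist ((x', y') : ℝ × ℝ) (((1 / 4 + 4 * x') / 5, y) : ℝ × ℝ) = (1 / 4 - x') / 5 := by
  simp only [setD, mem_setOf_eq] at hmem hy
  rw [Prod.dist_eq]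
  simp only [Real.dist_eq]
  have hx1 : x' ≤ 1 / 4 := (abs_le.mp hx).2
  have hx2 : -(1/4) ≤ x' := (abs_le.mp hx).1
  have h1 : |x' - (1 / 4 + 4 * x') / 5| = (1 / 4 - x') / 5 := by
    rw [abs_of_nonpos (by linarith)]; ring
  have h2 : |y' - y| ≤ (1 / 4 - x') / 5 := by
    have h3 : |y' - y| ≤ |y'| + |y| := abs_sub y' y
    rcases abs_cases ((1 / 4 + 4 * x') / 5) with ⟨e, _⟩ | ⟨e, _⟩ <;>
      rcases abs_cases x' with ⟨e', _⟩ | ⟨e', _⟩ <;>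
      rw [e] at hy <;> rw [e'] at hmem <;> linarith
  rw [h1, max_eq_left h2]
end
end

section
/- Let x̃, x ∈ [−1/4, 1/4] satisfy x̃ ≤ x ≤ (1/4 + 4x̃)/5. Then for every t ∈ [0,1], writing x_t = (1−t)·x̃ + t·x, the inequality 1/4 − |x_t| ≤ (5/4 − t/4)·(1/4 − |x|) holds. Consequently, the vertical height h_t = 2(1/4 − |x_t|)/9 of the set D = {(x,y) : 9|y| ≤ 1/4 − |x|} along the linear interpolation from x̃ to x satisfies h_t ≤ (5/4 − t/4)·h_1. -/
theorem height_estimate_along_interpolation :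
    ∀ x' ∈ Set.Icc (-(1 / 4) : ℝ) (1 / 4), ∀ x ∈ Set.Icc (-(1 / 4) : ℝ) (1 / 4),
      x' ≤ x → x ≤ (1 / 4 + 4 * x') / 5 →
      ∀ t ∈ Set.Icc (0 : ℝ) 1,
        (1 / 4 - |(1 - t) * x' + t * x| ≤ (5 / 4 - t / 4) * (1 / 4 - |x|)) ∧
        2 * (1 / 4 - |(1 - t) * x' + t * x|) / 9 ≤
          (5 / 4 - t / 4) * (2 * (1 / 4 - |x|) / 9) := by
  rintro x' ⟨h1, h2⟩ x ⟨h3, h4⟩ hle hub t ⟨ht0, ht1⟩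
  have key : 1 / 4 - |(1 - t) * x' + t * x| ≤ (5 / 4 - t / 4) * (1 / 4 - |x|) := by
    rcases abs_cases ((1 - t) * x' + t * x) with ⟨e1, _⟩ | ⟨e1, _⟩ <;>
    rcases abs_cases x with ⟨e2, _⟩ | ⟨e2, _⟩ <;> rw [e1, e2] <;> nlinarith
  exact ⟨key, by linarith⟩
end

section
/- For all x₀, x ∈ [−π/2, π/2] and all t ∈ [0,1], with d = |x − x₀|, the inequality sin²(d)·cos²((1−t)·x₀ + t·x) ≥ sin²(t·d)·cos²(x) holds (when d = 0 both sides are 0). This is the one-dimensional MCP(2,3)-density inequality for the weighted interval ([−π/2, π/2], euclidean distance, cos²(x)dx), under the linear contraction (1−t)x₀ + tx of the interval toward x₀. -/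
/- The one-dimensional MCP(2,3)-density inequality for the weighted interval
`([-π/2, π/2], |·|, cos²(x) dx)`: for all `x₀, x ∈ [-π/2, π/2]`, `t ∈ [0,1]` and
`d = |x - x₀|`, one has `sin²(d) cos²((1-t)x₀ + tx) ≥ sin²(td) cos²(x)`. -/

open Real

private lemma aux_mcp (x₀ x t : ℝ) (h₀ : -(π / 2) ≤ x₀) (hx : x ≤ π / 2)
    (hle : x₀ ≤ x) (ht0 : 0 ≤ t) (ht1 : t ≤ 1) :
    Real.sin (t * (x - x₀)) ^ 2 * Real.cos x ^ 2 ≤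
      Real.sin (x - x₀) ^ 2 * Real.cos ((1 - t) * x₀ + t * x) ^ 2 := by
  have hd0 : 0 ≤ x - x₀ := by linarith
  have hdπ : x - x₀ ≤ π := by
    have := Real.pi_pos; linarith
  have hstd : 0 ≤ Real.sin (t * (x - x₀)) :=
    Real.sin_nonneg_of_nonneg_of_le_pi (by positivity)
      (by nlinarith)
  have hcosx : 0 ≤ Real.cos x :=
    Real.cos_nonneg_of_mem_Icc ⟨by linarith, hx⟩
  have hcosx₀ : 0 ≤ Real.cos x₀ :=
    Real.cos_nonneg_of_mem_Icc ⟨h₀, by linarith⟩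
  have hs1t : 0 ≤ Real.sin ((1 - t) * (x - x₀)) :=
    Real.sin_nonneg_of_nonneg_of_le_pi (mul_nonneg (by linarith) hd0)
      (by nlinarith)
  -- key identity
  have key : Real.sin (x - x₀) * Real.cos ((1 - t) * x₀ + t * x)
      = Real.sin (t * (x - x₀)) * Real.cos x
        + Real.cos x₀ * Real.sin ((1 - t) * (x - x₀)) := by
    have gen : ∀ a s u : ℝ, Real.sin (s + u) * Real.cos (a + s)
        = Real.sin s * Real.cos (a + s + u) + Real.cos a * Real.sin u := by
      intro a s u
      simp only [Real.sin_add, Real.cos_add]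
      linear_combination (Real.sin u * Real.cos a) * (Real.sin_sq_add_cos_sq s)
    have h := gen x₀ (t * (x - x₀)) ((1 - t) * (x - x₀))
    rw [show x₀ + t * (x - x₀) + (1 - t) * (x - x₀) = x from by ring,
      show x₀ + t * (x - x₀) = (1 - t) * x₀ + t * x from by ring,
      show t * (x - x₀) + (1 - t) * (x - x₀) = x - x₀ from by ring] at h
    exact h
  have hlin : Real.sin (t * (x - x₀)) * Real.cos x ≤
      Real.sin (x - x₀) * Real.cos ((1 - t) * x₀ + t * x) := by
    rw [key]; nlinarith [mul_nonneg hcosx₀ hs1t]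
  have hnn : 0 ≤ Real.sin (t * (x - x₀)) * Real.cos x := mul_nonneg hstd hcosx
  calc Real.sin (t * (x - x₀)) ^ 2 * Real.cos x ^ 2
      = (Real.sin (t * (x - x₀)) * Real.cos x) ^ 2 := by ring
    _ ≤ (Real.sin (x - x₀) * Real.cos ((1 - t) * x₀ + t * x)) ^ 2 :=
        pow_le_pow_left₀ hnn hlin 2
    _ = Real.sin (x - x₀) ^ 2 * Real.cos ((1 - t) * x₀ + t * x) ^ 2 := by ring

theorem one_dim_MCP_density_inequality :
    ∀ x₀ ∈ Set.Icc (-(π / 2)) (π / 2), ∀ x ∈ Set.Icc (-(π / 2)) (π / 2),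
      ∀ t ∈ Set.Icc (0 : ℝ) 1,
        Real.sin (t * |x - x₀|) ^ 2 * Real.cos x ^ 2 ≤
          Real.sin |x - x₀| ^ 2 * Real.cos ((1 - t) * x₀ + t * x) ^ 2 := by
  rintro x₀ ⟨h₀l, h₀r⟩ x ⟨hxl, hxr⟩ t ⟨ht0, ht1⟩
  rcases le_total x₀ x with h | h
  · rw [abs_of_nonneg (by linarith)]
    exact aux_mcp x₀ x t h₀l hxr h ht0 ht1
  · rw [abs_of_nonpos (by linarith)]
    have := aux_mcp (-x₀) (-x) t (by linarith) (by linarith) (by linarith) ht0 ht1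
    have e1 : -x - -x₀ = -(x - x₀) := by ring
    have e2 : (1 - t) * -x₀ + t * -x = -((1 - t) * x₀ + t * x) := by ring
    rw [e1, e2, Real.cos_neg, Real.cos_neg] at this
    exact this
end
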